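/- Equality condition for conditional excess distortion: with K, Q, α as above, D(K(x)‖Q) = d(α_Q(x) ‖ Q(B_d(x))) holds if and only if K(x)(y) = α_Q(x)·Q(y)·1{d(x,y) ≤ d}/Q(B_d(x)) + (1-α_Q(x))·Q(y)·1{d(x,y) > d}/Q(B_d(x)ᶜ) for all y (with the second term absent when α_Q(x) = 1). -/
import Mathlib


noncomputable section

/-- `q` is a probability mass function on the finite alphabet `α`. -/
def isPMF {α : Type*} [Fintype α] (q : α → ℝ) : Prop :=
  (∀ a, 0 ≤ q a) ∧ ∑ a, q a = 1

/-- Shannon entropy (in bits) of a pmf on a finite alphabet. -/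
def ent {α : Type*} [Fintype α] (q : α → ℝ) : ℝ :=
  ∑ a, -(q a * Real.logb 2 (q a))

/-- Relative entropy (Kullback–Leibler divergence, in bits) between pmfs. -/
def klDiv {α : Type*} [Fintype α] (μ ν : α → ℝ) : ℝ :=
  ∑ a, μ a * Real.logb 2 (μ a / ν a)

/-- Probability, under `Q`, of the distortion-`D` ball around `x`:
`Q(B_D(x)) = Q {y : df x y ≤ D}`. -/
def probBall {X Y : Type*} [Fintype Y] (Q : Y → ℝ) (df : X → Y → ℝ) (D : ℝ) (x : X) : ℝ :=
  ∑ y, if df x y ≤ D then Q y else 0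

/-- Output marginal `P_Y` induced by input pmf `p` and kernel `K`. -/
def marg {X Y : Type*} [Fintype X] [Fintype Y] (p : X → ℝ) (K : X → Y → ℝ) : Y → ℝ :=
  fun y => ∑ x, p x * K x y

/-- Mutual information (in bits) `I(X;Y)` of the joint law `p ⊗ K`,
written as `E_X [ D(K(X) ‖ P_Y) ]`. -/
def mutInfo {X Y : Type*} [Fintype X] [Fintype Y] (p : X → ℝ) (K : X → Y → ℝ) : ℝ :=
  ∑ x, p x * klDiv (K x) (marg p K)

/-- Binary relative entropy `d(α‖q)` (in bits). -/
def bdiv (a q : ℝ) : ℝ :=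
  a * Real.logb 2 (a / q) + (1 - a) * Real.logb 2 ((1 - a) / (1 - q))

lemma term_nonneg (a b : ℝ) (ha : 0 ≤ a) (hb : 0 ≤ b) (hab : b = 0 → a = 0) :
    0 ≤ b - a + a * Real.log (a / b) ∧
      (b - a + a * Real.log (a / b) = 0 → a = b) := by
  rcases eq_or_lt_of_le hb with hb0 | hb0
  · have ha0 := hab hb0.symm
    simp [← hb0, ha0]
  rcases eq_or_lt_of_le ha with ha0 | ha0
  · constructor
    · simp [← ha0]; linarith
    · intro h; simp [← ha0] at h; linarith
  · have hba : 0 < b / a := div_pos hb0 ha0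
    have hlog : Real.log (b / a) ≤ b / a - 1 := Real.log_le_sub_one_of_pos hba
    have hrw : Real.log (a / b) = - Real.log (b / a) := by
      rw [← Real.log_inv]; congr 1; field_simp
    constructor
    · rw [hrw]
      have h1 : a * Real.log (b / a) ≤ a * (b / a - 1) :=
        mul_le_mul_of_nonneg_left hlog ha
      have h2 : a * (b / a - 1) = b - a := by field_simp
      nlinarith
    · intro h
      by_contra hne
      have h1 : b / a ≠ 1 := by
        intro hc
        rw [div_eq_one_iff_eq ha0.ne'] at hc
        exact hne hc.symm
      have := Real.log_lt_sub_one_of_pos hba h1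
      rw [hrw] at h
      have h2 : a * (b / a - 1) = b - a := by field_simp
      nlinarith

lemma gibbs {Y : Type*} [Fintype Y] (p m : Y → ℝ) (hp : isPMF p) (hm : isPMF m)
    (hac : ∀ y, m y = 0 → p y = 0) :
    0 ≤ klDiv p m ∧ (klDiv p m = 0 → ∀ y, p y = m y) := by
  have key : ∀ y ∈ Finset.univ, 0 ≤ m y - p y + p y * Real.log (p y / m y) :=
    fun y _ => (term_nonneg (p y) (m y) (hp.1 y) (hm.1 y) (hac y)).1
  have hsum : ∑ y, (m y - p y + p y * Real.log (p y / m y)) =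
      ∑ y, p y * Real.log (p y / m y) := by
    rw [Finset.sum_add_distrib, Finset.sum_sub_distrib, hp.2, hm.2]; ring
  have hkl : klDiv p m = (∑ y, p y * Real.log (p y / m y)) / Real.log 2 := by
    rw [klDiv, Finset.sum_div]
    refine Finset.sum_congr rfl fun y _ => ?_
    rw [Real.logb]; ring
  have hlog2 : 0 < Real.log 2 := Real.log_pos one_lt_two
  constructor
  · rw [hkl, ← hsum]
    exact div_nonneg (Finset.sum_nonneg key) hlog2.le
  · intro h y
    rw [hkl] at h
    have hS : ∑ y, (m y - p y + p y * Real.log (p y / m y)) = 0 := by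
      rw [hsum]
      rcases div_eq_zero_iff.1 h with h | h
      · exact h
      · linarith
    have := (Finset.sum_eq_zero_iff_of_nonneg key).1 hS y (Finset.mem_univ y)
    exact (term_nonneg (p y) (m y) (hp.1 y) (hm.1 y) (hac y)).2 this

/-- equality condition for conditional excess distortion. With `K` a pmf
putting mass at least `1-ε` on `B_D(x)`, `Q` a pmf with `Q(B_D(x)) > 0`, `K ≪ Q`, and
`α = max (1-ε) (Q(B_D(x)))`, equality `D(K‖Q) = d(α ‖ Q(B_D(x)))` holds if and only if
`K(y) = α·Q(y)·1{d(x,y) ≤ D}/Q(B_D(x)) + (1-α)·Q(y)·1{d(x,y) > D}/Q(B_D(x)ᶜ)`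
for all `y` (the second term vanishing when `α = 1`). -/
theorem cond_excess_klDiv_eq_iff {X Y : Type*} [Fintype Y]
    (K Q : Y → ℝ) (df : X → Y → ℝ) (D ε : ℝ) (x : X)
    (hε0 : 0 ≤ ε) (hε1 : ε ≤ 1)
    (hK : isPMF K) (hQ : isPMF Q)
    (hfeas : 1 - ε ≤ probBall K df D x)
    (hac : ∀ y, Q y = 0 → K y = 0)
    (hQB : 0 < probBall Q df D x) :
    klDiv K Q = bdiv (max (1 - ε) (probBall Q df D x)) (probBall Q df D x) ↔
      ∀ y, K y =
        max (1 - ε) (probBall Q df D x) *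
            (if df x y ≤ D then Q y else 0) / probBall Q df D x +
          (1 - max (1 - ε) (probBall Q df D x)) *
            (if df x y ≤ D then 0 else Q y) / (1 - probBall Q df D x) := by
  set q : ℝ := probBall Q df D x with hqdef
  set a : ℝ := max (1 - ε) q with hadef
  set KB : ℝ := probBall K df D x with hKBdef
  set M : Y → ℝ := fun y =>
      a * (if df x y ≤ D then Q y else 0) / q +
        (1 - a) * (if df x y ≤ D then 0 else Q y) / (1 - q) with hMdef
  have hqS : q = ∑ y, (if df x y ≤ D then Q y else 0) := rfl
  have hKBS : KB = ∑ y, (if df x y ≤ D then K y else 0) := rfl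
  -- basic bounds
  have hq1 : q ≤ 1 := by
    rw [hqS, ← hQ.2]
    refine Finset.sum_le_sum fun y _ => ?_
    split_ifs with h
    · exact le_refl _
    · exact hQ.1 y
  have hKB1 : KB ≤ 1 := by
    rw [hKBS, ← hK.2]
    refine Finset.sum_le_sum fun y _ => ?_
    split_ifs with h
    · exact le_refl _
    · exact hK.1 y
  have hqa : q ≤ a := le_max_right _ _
  have ha1 : a ≤ 1 := max_le (by linarith) hq1
  have ha0 : 0 < a := lt_of_lt_of_le hQB hqa
  have hQc : ∑ y, (if df x y ≤ D then 0 else Q y) = 1 - q := by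
    have : q + ∑ y, (if df x y ≤ D then 0 else Q y) = 1 := by
      rw [hqS, ← Finset.sum_add_distrib, ← hQ.2]
      refine Finset.sum_congr rfl fun y _ => ?_
      split_ifs <;> ring
    linarith
  have hKc : ∑ y, (if df x y ≤ D then 0 else K y) = 1 - KB := by
    have : KB + ∑ y, (if df x y ≤ D then 0 else K y) = 1 := by
      rw [hKBS, ← Finset.sum_add_distrib, ← hK.2]
      refine Finset.sum_congr rfl fun y _ => ?_
      split_ifs <;> ring
    linarith
  -- if a = 1 then K vanishes outside the ball
  have hA1 : a = 1 → ∀ y, ¬ df x y ≤ D → K y = 0 := by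
    intro hA y hy
    have h1 : (1:ℝ) ≤ 1 - ε ∨ (1:ℝ) ≤ q := le_max_iff.1 (le_of_eq hA.symm)
    have hzero : ∀ (f : Y → ℝ), (∀ z, 0 ≤ f z) →
        (∑ z, (if df x z ≤ D then 0 else f z)) = 0 → f y = 0 := by
      intro f hf hs
      have := (Finset.sum_eq_zero_iff_of_nonneg
        (fun z _ => by split_ifs; exacts [le_refl _, hf z])).1 hs y (Finset.mem_univ y)
      simpa [hy] using this
    rcases h1 with h | h
    · -- ε = 0, so K puts mass 1 on the ball
      have hKB : KB = 1 := le_antisymm hKB1 (le_trans h hfeas)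
      exact hzero K hK.1 (by rw [hKc, hKB]; ring)
    · have hq : q = 1 := le_antisymm hq1 h
      exact hac y (hzero Q hQ.1 (by rw [hQc, hq]; ring))
  -- M is a pmf
  have hMpmf : isPMF M := by
    constructor
    · intro y
      have h1 : 0 ≤ (if df x y ≤ D then Q y else 0) := by
        split_ifs; exacts [hQ.1 y, le_refl 0]
      have h2 : 0 ≤ (if df x y ≤ D then 0 else Q y) := by
        split_ifs; exacts [le_refl 0, hQ.1 y]
      exact add_nonneg (div_nonneg (mul_nonneg ha0.le h1) hQB.le)
        (div_nonneg (mul_nonneg (by linarith) h2) (by linarith))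
    · rw [hMdef]
      rw [Finset.sum_add_distrib]
      have h1 : ∑ y, a * (if df x y ≤ D then Q y else 0) / q = a := by
        rw [← Finset.sum_div, ← Finset.mul_sum, ← hqS, mul_div_assoc,
          div_self hQB.ne', mul_one]
      rcases eq_or_lt_of_le hq1 with hq | hq
      · have hA : a = 1 := le_antisymm ha1 (by rw [← hq]; exact hqa)
        have h2 : ∑ y, (1 - a) * (if df x y ≤ D then 0 else Q y) / (1 - q) = 0 :=
          Finset.sum_eq_zero fun y _ => by rw [hA]; simp
        rw [h1, h2, hA]; ring
      · have h2 : ∑ y, (1 - a) * (if df x y ≤ D then 0 else Q y) / (1 - q) = 1 - a := by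
          rw [← Finset.sum_div, ← Finset.mul_sum, hQc, mul_div_assoc,
            div_self (by linarith : (1:ℝ) - q ≠ 0), mul_one]
        rw [h1, h2]; ring
  -- K ≪ M
  have hMac : ∀ y, M y = 0 → K y = 0 := by
    intro y hy
    by_cases hB : df x y ≤ D
    · rw [hMdef] at hy
      simp only [hB, if_true] at hy
      have : a * Q y / q = 0 := by
        have : (1 - a) * 0 / (1 - q) = 0 := by ring
        linarith [hy, this]
      rcases div_eq_zero_iff.1 this with h | h
      · rcases mul_eq_zero.1 h with h | h
        · exact absurd h ha0.ne'
        · exact hac y h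
      · exact absurd h hQB.ne'
    · rcases eq_or_lt_of_le ha1 with hA | hA
      · exact hA1 hA y hB
      · rw [hMdef] at hy
        simp only [hB, if_false] at hy
        have hq : q < 1 := lt_of_le_of_lt hqa hA
        have : (1 - a) * Q y / (1 - q) = 0 := by
          have : a * 0 / q = 0 := by ring
          linarith [hy, this]
        rcases div_eq_zero_iff.1 this with h | h
        · rcases mul_eq_zero.1 h with h | h
          · exact absurd h (by linarith)
          · exact hac y h
        · exact absurd h (by linarith)
  set L1 : ℝ := Real.logb 2 (a / q) with hL1
  set L2 : ℝ := Real.logb 2 ((1 - a) / (1 - q)) with hL2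
  -- key decomposition
  have hsplit : klDiv K Q = klDiv K M + (KB * L1 + (1 - KB) * L2) := by
    have hpt : ∀ y, K y * Real.logb 2 (K y / Q y) =
        K y * Real.logb 2 (K y / M y) +
          ((if df x y ≤ D then K y else 0) * L1 + (if df x y ≤ D then 0 else K y) * L2) := by
      intro y
      by_cases hK0 : K y = 0
      · simp [hK0]
      have hKy : 0 < K y := lt_of_le_of_ne (hK.1 y) (Ne.symm hK0)
      have hQy : 0 < Q y := by
        rcases eq_or_lt_of_le (hQ.1 y) with h | h
        · exact absurd (hac y h.symm) hK0
        · exact h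
      by_cases hB : df x y ≤ D
      · have hMy : M y = a * Q y / q := by rw [hMdef]; simp [hB]
        have hMy0 : 0 < M y := by rw [hMy]; positivity
        have hratio : K y / Q y = (K y / M y) * (a / q) := by
          rw [hMy]
          have h1 : a ≠ 0 := ha0.ne'
          have h2 : q ≠ 0 := hQB.ne'
          have h3 : Q y ≠ 0 := hQy.ne'
          field_simp
        rw [hratio, Real.logb_mul (ne_of_gt (div_pos hKy hMy0))
          (ne_of_gt (div_pos ha0 hQB))]
        simp [hB, hL1]
        ring
      · have hA : a < 1 := by
          rcases eq_or_lt_of_le ha1 with hA | hA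
          · exact absurd (hA1 hA y hB) hK0
          · exact hA
        have hq : q < 1 := lt_of_le_of_lt hqa hA
        have hMy : M y = (1 - a) * Q y / (1 - q) := by rw [hMdef]; simp [hB]
        have hMy0 : 0 < M y := by
          rw [hMy]; exact div_pos (mul_pos (by linarith) hQy) (by linarith)
        have hratio : K y / Q y = (K y / M y) * ((1 - a) / (1 - q)) := by
          rw [hMy]
          have h1 : (1:ℝ) - a ≠ 0 := by linarith
          have h2 : (1:ℝ) - q ≠ 0 := by linarith
          have h3 : Q y ≠ 0 := hQy.ne'
          field_simp
        rw [hratio, Real.logb_mul (ne_of_gt (div_pos hKy hMy0))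
          (ne_of_gt (div_pos (by linarith) (by linarith)))]
        simp [hB, hL2]
        ring
    rw [klDiv]
    calc ∑ y, K y * Real.logb 2 (K y / Q y)
        = ∑ y, (K y * Real.logb 2 (K y / M y) +
            ((if df x y ≤ D then K y else 0) * L1 + (if df x y ≤ D then 0 else K y) * L2)) :=
          Finset.sum_congr rfl fun y _ => hpt y
      _ = klDiv K M + (KB * L1 + (1 - KB) * L2) := by
          rw [Finset.sum_add_distrib, Finset.sum_add_distrib, ← Finset.sum_mul,
            ← Finset.sum_mul, ← hKBS, hKc, klDiv]
  have hbdiv : bdiv a q = a * L1 + (1 - a) * L2 := rfl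
  -- nonnegativity of the slack term
  have hprod : 0 ≤ (KB - a) * (L1 - L2) := by
    rcases le_or_gt (1 - ε) q with hc | hc
    · have hA : a = q := max_eq_right hc
      have hL1' : L1 = 0 := by rw [hL1, hA, div_self hQB.ne', Real.logb_one]
      have hL2' : L2 = 0 := by
        rcases eq_or_lt_of_le hq1 with hq | hq
        · rw [hL2, hA, ← hq]
          simp
        · rw [hL2, hA, div_self (by linarith : (1:ℝ) - q ≠ 0), Real.logb_one]
      rw [hL1', hL2']; simp
    · have hA : a = 1 - ε := max_eq_left hc.le
      have hKBa : a ≤ KB := by rw [hA]; exact hfeas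
      have hqA : q < a := by rw [hA]; exact hc
      have hL1' : 0 ≤ L1 :=
        Real.logb_nonneg one_lt_two ((one_le_div hQB).2 hqA.le)
      have hL2' : L2 ≤ 0 := by
        refine Real.logb_nonpos one_lt_two (div_nonneg (by linarith) (by linarith)) ?_
        rcases eq_or_lt_of_le ha1 with hA' | hA'
        · rw [← hA']; simp
          positivity
        · exact (div_le_one (by linarith)).2 (by linarith)
      exact mul_nonneg (by linarith) (by linarith)
  obtain ⟨hKM0, hKMeq⟩ := gibbs K M hK hMpmf hMac
  constructor
  · intro h
    have h0 : klDiv K M + (KB - a) * (L1 - L2) = 0 := by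
      rw [h, hbdiv] at hsplit
      linear_combination -hsplit
    have : klDiv K M = 0 := by linarith
    exact hKMeq this
  · intro h
    have hKBa : KB = a := by
      rw [hKBS]
      have : ∀ y, (if df x y ≤ D then K y else 0) = a * (if df x y ≤ D then Q y else 0) / q := by
        intro y
        split_ifs with hB
        · rw [h y]; simp [hB]
        · simp
      rw [Finset.sum_congr rfl fun y _ => this y, ← Finset.sum_div, ← Finset.mul_sum,
        ← hqS, mul_div_assoc, div_self hQB.ne', mul_one]
    have hKM : klDiv K M = 0 := by
      rw [klDiv]
      refine Finset.sum_eq_zero fun y _ => ?_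
      have hy' : K y = M y := h y
      by_cases hM0 : M y = 0
      · rw [hy']; simp [hM0]
      · rw [hy', div_self hM0, Real.logb_one, mul_zero]
    rw [hsplit, hKM, hKBa, hbdiv]; ring
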